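/- Let n ≥ 1, k ≥ 2, and f : 𝔽_{2^n} → ℤ/2^kℤ. Define g : 𝔽_{2^n} → ℤ/2^kℤ by g(x) = f(x) + 2^{k−2}·ι(Tr(x)) + 2^{k−1}·ι(σ(1,x)). Then K_f(1,u) = H_g(1,u) for every u ∈ 𝔽_{2^n}; consequently, f is nega-gbent if and only if g is gbent. -/

import Mathlib

noncomputable section

/-- The absolute trace Tr(x) = x + x² + x⁴ + … + x^{2^{n−1}}. -/
def Tr {F : Type} [Field F] (n : ℕ) (x : F) : F :=
  ∑ i ∈ Finset.range n, x ^ (2 ^ i)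

/-- σ(c,x) = Σ_{0 ≤ i < j ≤ n−1} (cx)^{2^i} (cx)^{2^j} -/
def sig {F : Type} [Field F] (n : ℕ) (c x : F) : F :=
  ∑ j ∈ Finset.range n, ∑ i ∈ Finset.range j, (c * x) ^ (2 ^ i) * (c * x) ^ (2 ^ j)

/-- ι(e): the integer lift of e ∈ {0,1} ⊆ F. -/
def iotaN {F : Type} [Field F] [DecidableEq F] (e : F) : ℕ :=
  if e = 1 then 1 else 0

/-- ι(e) viewed in ℤ/2^kℤ. -/
def iotaZ {F : Type} [Field F] [DecidableEq F] (k : ℕ) (e : F) : ZMod (2 ^ k) :=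
  if e = 1 then 1 else 0

/-- ζ = e^{2πi/2^k}. -/
def zeta (k : ℕ) : ℂ := Complex.exp (2 * Real.pi * Complex.I / 2 ^ k)

/-- c₀ ∈ {0,1} ⊆ F equals 1 if c is odd and 0 if c is even. -/
def czero {F : Type} [Field F] (k : ℕ) (c : ZMod (2 ^ k)) : F :=
  if c.val % 2 = 1 then 1 else 0

/-- The generalized Walsh–Hadamard transform
H_f(c,u) = Σ_{x ∈ F} ζ^{c·f(x)} (−1)^{ι(Tr(ux))}. -/
def gWH {F : Type} [Field F] [Fintype F] [DecidableEq F] (n k : ℕ)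
    (f : F → ZMod (2 ^ k)) (c : ZMod (2 ^ k)) (u : F) : ℂ :=
  ∑ x : F, zeta k ^ (c * f x).val * (-1 : ℂ) ^ (iotaN (Tr n (u * x)))

/-- The nega-ℤ_{2^k}-Hadamard transform
K_f(c,u) = Σ_{x ∈ F} (−1)^{ι(Tr(ux)) + ι(σ(c₀,x))} ζ^{c·f(x)} i^{ι(Tr(c₀x))}. -/
def negaK {F : Type} [Field F] [Fintype F] [DecidableEq F] (n k : ℕ)
    (f : F → ZMod (2 ^ k)) (c : ZMod (2 ^ k)) (u : F) : ℂ :=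
  ∑ x : F, (-1 : ℂ) ^ (iotaN (Tr n (u * x)) + iotaN (sig n (czero k c) x)) *
    zeta k ^ (c * f x).val * Complex.I ^ (iotaN (Tr n (czero k c * x)))

/-!
Taking `c = 1` makes `c₀ = 1`. Since `ζ^{2^{k-2}} = i` and `ζ^{2^{k-1}} = -1`, the factors
`i^{ι(Tr x)}` and `(-1)^{ι(σ(1,x))}` of the nega-Hadamard kernel are exactly
`ζ^{2^{k-2} ι(Tr x)}` and `ζ^{2^{k-1} ι(σ(1,x))}`, so `K_f(1,u)` and `H_g(1,u)` agree termwise.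
-/

lemma zeta_pow_two_pow {m k : ℕ} (hm : m ≤ k) : zeta k ^ 2 ^ m = zeta (k - m) := by
  unfold zeta
  rw [← Complex.exp_nat_mul]
  congr 1
  have hsplit : (2 : ℂ) ^ k = 2 ^ (k - m) * 2 ^ m := by
    rw [← pow_add, Nat.sub_add_cancel hm]
  rw [hsplit]
  push_cast
  field_simp

lemma zeta_zero : zeta 0 = 1 := by
  simp [zeta]

lemma zeta_one : zeta 1 = -1 := by
  have h : 2 * Real.pi * Complex.I / 2 ^ 1 = Real.pi * Complex.I := by ring
  rw [zeta, h, Complex.exp_pi_mul_I]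

lemma zeta_two : zeta 2 = Complex.I := by
  have h : 2 * Real.pi * Complex.I / 2 ^ 2 = ((Real.pi / 2 : ℝ) : ℂ) * Complex.I := by
    push_cast; ring
  rw [zeta, h, Complex.exp_mul_I, ← Complex.ofReal_cos, ← Complex.ofReal_sin,
    Real.cos_pi_div_two, Real.sin_pi_div_two]
  simp

lemma zeta_pow_mod_two_pow (k m : ℕ) : zeta k ^ (m % 2 ^ k) = zeta k ^ m := by
  conv_rhs => rw [← Nat.mod_add_div m (2 ^ k)]
  rw [pow_add, pow_mul, zeta_pow_two_pow le_rfl, Nat.sub_self, zeta_zero, one_pow, mul_one]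

lemma zeta_pow_val_add (k : ℕ) (a b : ZMod (2 ^ k)) :
    zeta k ^ (a + b).val = zeta k ^ a.val * zeta k ^ b.val := by
  rw [ZMod.val_add, zeta_pow_mod_two_pow, pow_add]

lemma zeta_pow_val_two_pow_mul_iotaZ {F : Type} [Field F] [DecidableEq F] {m k : ℕ}
    (hm : m < k) (e : F) :
    zeta k ^ (2 ^ m * iotaZ k e : ZMod (2 ^ k)).val = zeta (k - m) ^ iotaN e := by
  unfold iotaZ iotaN
  split_ifs
  · have h : (2 ^ m : ZMod (2 ^ k)) = ((2 ^ m : ℕ) : ZMod (2 ^ k)) := by push_cast; rfl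
    rw [mul_one, pow_one, h, ZMod.val_natCast_of_lt (Nat.pow_lt_pow_right one_lt_two hm),
      zeta_pow_two_pow hm.le]
  · simp

lemma czero_one {F : Type} [Field F] {k : ℕ} (hk : 1 ≤ k) :
    czero (F := F) k (1 : ZMod (2 ^ k)) = 1 := by
  have : Fact (1 < 2 ^ k) := ⟨Nat.one_lt_two_pow (by omega)⟩
  simp [czero, ZMod.val_one]

theorem stmt8_general {F : Type} [Field F] [Fintype F] [DecidableEq F] (n k : ℕ)
    (hk : 2 ≤ k)
    (f : F → ZMod (2 ^ k))
    (g : F → ZMod (2 ^ k))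
    (hg : ∀ x, g x = f x + 2 ^ (k - 2) * iotaZ k (Tr n x) +
      2 ^ (k - 1) * iotaZ k (sig n 1 x)) :
    (∀ u : F, negaK n k f 1 u = gWH n k g 1 u) ∧
    ((∀ u : F, ‖negaK n k f 1 u‖ = Real.sqrt (2 ^ n)) ↔
      (∀ u : F, ‖gWH n k g 1 u‖ = Real.sqrt (2 ^ n))) := by
  have hK : ∀ u : F, negaK n k f 1 u = gWH n k g 1 u := by
    intro u
    refine Finset.sum_congr rfl fun x _ => ?_
    have hTr : k - (k - 2) = 2 := by omega
    have hsig : k - (k - 1) = 1 := by omega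
    simp only [czero_one (F := F) (show 1 ≤ k by omega), one_mul]
    rw [hg x, zeta_pow_val_add, zeta_pow_val_add,
      zeta_pow_val_two_pow_mul_iotaZ (by omega), zeta_pow_val_two_pow_mul_iotaZ (by omega),
      hTr, hsig, zeta_two, zeta_one, pow_add]
    ring
  exact ⟨hK, by simp only [hK]⟩

/-- With g(x) = f(x) + 2^{k−2}·ι(Tr(x)) + 2^{k−1}·ι(σ(1,x)), we have
K_f(1,u) = H_g(1,u) for every u; consequently f is nega-gbent iff g is gbent. -/
theorem stmt8 {F : Type} [Field F] [Fintype F] [DecidableEq F] (n k : ℕ)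
    (hn : 1 ≤ n) (hk : 2 ≤ k) (hF : Fintype.card F = 2 ^ n)
    (f : F → ZMod (2 ^ k))
    (g : F → ZMod (2 ^ k))
    (hg : ∀ x, g x = f x + 2 ^ (k - 2) * iotaZ k (Tr n x) +
      2 ^ (k - 1) * iotaZ k (sig n 1 x)) :
    (∀ u : F, negaK n k f 1 u = gWH n k g 1 u) ∧
    ((∀ u : F, ‖negaK n k f 1 u‖ = Real.sqrt (2 ^ n)) ↔
      (∀ u : F, ‖gWH n k g 1 u‖ = Real.sqrt (2 ^ n))) :=
  stmt8_general n k hk f g hg
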